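/- arXiv:0909.0523 — 5 statements merged into one kernel-verified Lean document; each statement's English description precedes it below -/
import Mathlib

section
/- Let $c_0, c_1 > 0$ and let $q_1, q_2 : [0,1] \to \mathbb{R}$ be measurable with $c_0 \le q_j(x) \le c_1$ for all $x \in [0,1]$, $j=1,2$. For each $k > 0$ and $j=1,2$, let $u_j(\cdot,k) : [0,1] \to \mathbb{R}$ be the continuous solution of the Volterra equation $u_j(x,k) = 1 + k^2 \int_0^x (x-s) q_j(s) u_j(s,k)\,ds$. Let $h : [0,1] \to \mathbb{R}$ be integrable and suppose there exist finitely many points $0 = z_0 < z_1 < \dots < z_n = 1$ such that on each subinterval $[z_{m}, z_{m+1}]$ the function $h$ is either nonnegative almost everywhere or nonpositive almost everywhere. If $\int_0^1 h(x) u_1(x,k) u_2(x,k)\,dx = 0$ for every $k > 0$, then $h(x) = 0$ for almost every $x \in [0,1]$. -/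
/-!
Both `u₁` and `u₂` are `≥ 1` and nondecreasing, and `u₁(b) ≥ u₁(a) (1 + k² c₀ (b - a)² / 2)`, so
the ratio `U_k(b) / U_k(a)` of the weights `U_k = u₁ u₂` is unbounded in `k` for any `a < b`.
Suppose `h = 0` a.e. on `(t, 1]` and `h ≥ 0` on `(m, t]`. For `m < m' ≤ t`, orthogonality gives
`U_k(m') ∫_{m'}^t h ≤ U_k(m) ∫_0^m |h|`, and letting `U_k(m') / U_k(m) → ∞` forces `h = 0` on
`(m', t]`, hence on `(m, t]`. Descending through the blocks of the partition, `h = 0` a.e.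
-/

open MeasureTheory intervalIntegral Set Filter

lemma Measurable.integrableOn_Icc_of_bounds {f : ℝ → ℝ} {a b c0 c1 : ℝ} (hf : Measurable f)
    (hbnd : ∀ x ∈ Icc a b, c0 ≤ f x ∧ f x ≤ c1) : IntegrableOn f (Icc a b) :=
  Measure.integrableOn_of_bounded (by simp) hf.aestronglyMeasurable <| by
    filter_upwards [ae_restrict_mem measurableSet_Icc] with x hx
    exact abs_le_max_abs_abs (hbnd x hx).1 (hbnd x hx).2

lemma integral_sub_mul_sub_integral_sub_mul {g : ℝ → ℝ} {a b : ℝ}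
    (hg0a : IntervalIntegrable g volume 0 a) (hgab : IntervalIntegrable g volume a b) :
    (∫ s in (0:ℝ)..b, (b - s) * g s) - ∫ s in (0:ℝ)..a, (a - s) * g s
      = (b - a) * (∫ s in (0:ℝ)..a, g s) + ∫ s in a..b, (b - s) * g s := by
  have hw : ∀ {c d : ℝ} (x : ℝ), IntervalIntegrable g volume c d →
      IntervalIntegrable (fun s => (x - s) * g s) volume c d :=
    fun x hg => hg.continuousOn_mul (by fun_prop)
  rw [← integral_add_adjacent_intervals (hw b hg0a) (hw b hgab), add_sub_right_comm,
    ← integral_sub (hw b hg0a) (hw a hg0a), ← intervalIntegral.integral_const_mul]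
  congr 2 with s
  ring

/-- The integral form of `-u'' + k² q u = 0`, `u(0) = 1`, `u'(0) = 0` on `[0, 1]`. -/
def IsVolterraSolution (k : ℝ) (q u : ℝ → ℝ) : Prop :=
  ContinuousOn u (Icc 0 1) ∧
    ∀ x ∈ Icc (0:ℝ) 1, u x = 1 + k ^ 2 * ∫ s in (0:ℝ)..x, (x - s) * q s * u s

namespace IsVolterraSolution

variable {k : ℝ} {q u : ℝ → ℝ}

lemma one_le (hu : IsVolterraSolution k q u) (hq : ∀ x ∈ Icc (0:ℝ) 1, 0 ≤ q x) {x : ℝ}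
    (hx : x ∈ Icc (0:ℝ) 1) : 1 ≤ u x := by
  have one_le_of_pos : ∀ x ∈ Icc (0:ℝ) 1, (∀ s ∈ Ico 0 x, 0 < u s) → 1 ≤ u x := by
    intro x hx hpos
    have : 0 ≤ ∫ s in (0:ℝ)..x, (x - s) * q s * u s := by
      refine integral_nonneg hx.1 fun s hs => ?_
      rcases hs.2.eq_or_lt with rfl | hsx
      · simp
      · exact mul_nonneg (mul_nonneg (sub_nonneg.2 hs.2) (hq s ⟨hs.1, hs.2.trans hx.2⟩))
          (hpos s ⟨hs.1, hsx⟩).le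
    rw [hu.2 x hx]
    exact le_add_of_nonneg_right (mul_nonneg (sq_nonneg k) this)
  -- At the first zero `T` of `u`, `u` is positive on `[0, T)`, which forces `u T ≥ 1`.
  have hpos : ∀ x ∈ Icc (0:ℝ) 1, 0 < u x := by
    by_contra! ⟨x, hx, hux⟩
    set Z := Icc (0:ℝ) 1 ∩ u ⁻¹' Iic 0
    have hZ_bdd : BddBelow Z := ⟨0, fun t ht => ht.1.1⟩
    have hTZ : sInf Z ∈ Z :=
      (hu.1.preimage_isClosed_of_isClosed isClosed_Icc isClosed_Iic).csInf_mem ⟨x, hx, hux⟩ hZ_bdd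
    have := one_le_of_pos _ hTZ.1 fun s hs => not_le.1 fun hus =>
      (csInf_le hZ_bdd ⟨⟨hs.1, hs.2.le.trans hTZ.1.2⟩, hus⟩).not_gt hs.2
    linarith [show u (sInf Z) ≤ 0 from hTZ.2]
  exact one_le_of_pos x hx fun s hs => hpos s ⟨hs.1, hs.2.le.trans hx.2⟩

lemma pos (hu : IsVolterraSolution k q u) (hq : ∀ x ∈ Icc (0:ℝ) 1, 0 ≤ q x) {x : ℝ}
    (hx : x ∈ Icc (0:ℝ) 1) : 0 < u x :=
  one_pos.trans_le (hu.one_le hq hx)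

lemma intervalIntegrable_mul (hu : IsVolterraSolution k q u) (hq_int : IntegrableOn q (Icc 0 1))
    {a b : ℝ} (ha : a ∈ Icc (0:ℝ) 1) (hb : b ∈ Icc (0:ℝ) 1) :
    IntervalIntegrable (fun s => q s * u s) volume a b :=
  ((hq_int.mul_continuousOn hu.1 isCompact_Icc).mono_set
    (uIcc_subset_Icc ha hb)).intervalIntegrable

lemma sub_eq (hu : IsVolterraSolution k q u) (hq_int : IntegrableOn q (Icc 0 1)) {a b : ℝ}
    (ha : a ∈ Icc (0:ℝ) 1) (hb : b ∈ Icc (0:ℝ) 1) :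
    u b - u a = k ^ 2 * ((b - a) * (∫ s in (0:ℝ)..a, q s * u s)
      + ∫ s in a..b, (b - s) * (q s * u s)) := by
  have h0 : (0:ℝ) ∈ Icc (0:ℝ) 1 := ⟨le_rfl, zero_le_one⟩
  rw [hu.2 b hb, hu.2 a ha, ← integral_sub_mul_sub_integral_sub_mul
    (hu.intervalIntegrable_mul hq_int h0 ha) (hu.intervalIntegrable_mul hq_int ha hb)]
  simp only [mul_assoc]
  ring

lemma monotoneOn (hu : IsVolterraSolution k q u) (hq : ∀ x ∈ Icc (0:ℝ) 1, 0 ≤ q x)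
    (hq_int : IntegrableOn q (Icc 0 1)) : MonotoneOn u (Icc 0 1) := by
  intro a ha b hb hab
  have hqu : ∀ s ∈ Icc (0:ℝ) 1, 0 ≤ q s * u s := fun s hs =>
    mul_nonneg (hq s hs) (hu.pos hq hs).le
  rw [← sub_nonneg, hu.sub_eq hq_int ha hb]
  refine mul_nonneg (sq_nonneg k) (add_nonneg (mul_nonneg (sub_nonneg.2 hab) ?_) ?_)
  · exact integral_nonneg ha.1 fun s hs => hqu s ⟨hs.1, hs.2.trans ha.2⟩
  · exact integral_nonneg hab fun s hs =>
      mul_nonneg (sub_nonneg.2 hs.2) (hqu s ⟨ha.1.trans hs.1, hs.2.trans hb.2⟩)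

/-- On `[a, b]` the integrand of `u b - u a` is at least `(b - s) c₀ u(a)`. -/
lemma mul_one_add_le (hu : IsVolterraSolution k q u) {c0 : ℝ} (hc0 : 0 ≤ c0)
    (hq : ∀ x ∈ Icc (0:ℝ) 1, c0 ≤ q x) (hq_int : IntegrableOn q (Icc 0 1)) {a b : ℝ}
    (ha : a ∈ Icc (0:ℝ) 1) (hb : b ∈ Icc (0:ℝ) 1) (hab : a ≤ b) :
    u a * (1 + k ^ 2 * (c0 * (b - a) ^ 2 / 2)) ≤ u b := by
  have hq_nonneg : ∀ x ∈ Icc (0:ℝ) 1, 0 ≤ q x := fun x hx => hc0.trans (hq x hx)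
  have hmono := hu.monotoneOn hq_nonneg hq_int
  have hua := hu.one_le hq_nonneg ha
  have hsub := hu.sub_eq hq_int ha hb
  have hIcc : ∀ s ∈ Icc a b, s ∈ Icc (0:ℝ) 1 := fun s hs => ⟨ha.1.trans hs.1, hs.2.trans hb.2⟩
  have hfirst : 0 ≤ (b - a) * ∫ s in (0:ℝ)..a, q s * u s :=
    mul_nonneg (sub_nonneg.2 hab) <| integral_nonneg ha.1 fun s hs =>
      mul_nonneg (hq_nonneg s ⟨hs.1, hs.2.trans ha.2⟩) (hu.pos hq_nonneg ⟨hs.1, hs.2.trans ha.2⟩).le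
  have hsecond : c0 * u a * ((b - a) ^ 2 / 2) ≤ ∫ s in a..b, (b - s) * (q s * u s) := by
    calc c0 * u a * ((b - a) ^ 2 / 2) = ∫ s in a..b, (b - s) * (c0 * u a) := by
          rw [intervalIntegral.integral_mul_const, integral_comp_sub_left (fun x => x)]
          simp only [sub_self, integral_id]
          ring
      _ ≤ ∫ s in a..b, (b - s) * (q s * u s) := by
          refine integral_mono_on hab (Continuous.intervalIntegrable (by fun_prop) _ _)
            ((hu.intervalIntegrable_mul hq_int ha hb).continuousOn_mul (by fun_prop))
            fun s hs => ?_
          exact mul_le_mul_of_nonneg_left (mul_le_mul (hq s (hIcc s hs))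
            (hmono ha (hIcc s hs) hs.1) (by linarith) (hq_nonneg s (hIcc s hs)))
            (sub_nonneg.2 hs.2)
  nlinarith [sq_nonneg k, mul_le_mul_of_nonneg_left hsecond (sq_nonneg k)]

end IsVolterraSolution

lemma ae_mem_Ioc_of_forall_Ioo {μ : Measure ℝ} {p : ℝ → Prop} {a b : ℝ}
    (h : ∀ a' ∈ Ioo a b, ∀ᵐ x ∂μ, x ∈ Ioc a' b → p x) : ∀ᵐ x ∂μ, x ∈ Ioc a b → p x := by
  rcases le_or_gt b a with hba | hab
  · exact Eventually.of_forall fun x hx => absurd (hx.1.trans_le hx.2) hba.not_gt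
  have hpos : ∀ N : ℕ, (0:ℝ) < N + 2 := fun N => by positivity
  have hseq : ∀ N : ℕ, ∀ᵐ x ∂μ, x ∈ Ioc (a + (b - a) / (N + 2)) b → p x := fun N =>
    h _ ⟨lt_add_of_pos_right a (div_pos (sub_pos.2 hab) (hpos N)), by
      rw [← lt_sub_iff_add_lt', div_lt_iff₀ (hpos N)]; nlinarith⟩
  filter_upwards [ae_all_iff.2 hseq] with x hx hmem
  obtain ⟨N, hN⟩ := exists_nat_gt ((b - a) / (x - a))
  have hxa : 0 < x - a := sub_pos.2 hmem.1
  refine hx N ⟨?_, hmem.2⟩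
  rw [← lt_sub_iff_add_lt', div_lt_iff₀ (hpos N)]
  rw [div_lt_iff₀ hxa] at hN
  nlinarith

lemma abs_setIntegral_mul_le {α : Type*} [MeasurableSpace α] {μ : Measure α} {h V : α → ℝ}
    {s : Set α} {C : ℝ} (hs : MeasurableSet s) (hh : IntegrableOn h s μ)
    (hV : ∀ x ∈ s, |V x| ≤ C) : |∫ x in s, h x * V x ∂μ| ≤ C * ∫ x in s, |h x| ∂μ := by
  rw [← Real.norm_eq_abs, mul_comm, ← MeasureTheory.integral_mul_const]
  refine norm_integral_le_of_norm_le (hh.abs.mul_const _) ?_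
  filter_upwards [ae_restrict_mem hs] with x hx
  rw [norm_mul, Real.norm_eq_abs, Real.norm_eq_abs]
  exact mul_le_mul_of_nonneg_left (hV x hx) (abs_nonneg _)

/-- Splitting `∫₀¹ h V` at `m ≤ m' ≤ t`: the piece on `(0, m]` is at least `-V(m) ∫₀ᵐ |h|`, the
piece on `(m, m']` is nonnegative, the piece on `(m', t]` is at least `V(m') ∫_{m'}^t h`, and the
piece on `(t, 1]` vanishes. -/
lemma mul_setIntegral_le_of_integral_mul_eq_zero {h V : ℝ → ℝ} {m m' t : ℝ}
    (hh : IntegrableOn h (Icc 0 1)) (hV_cont : ContinuousOn V (Icc 0 1))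
    (hV_nonneg : ∀ x ∈ Icc (0:ℝ) 1, 0 ≤ V x) (hV_mono : MonotoneOn V (Icc 0 1))
    (hm : 0 ≤ m) (hmm' : m ≤ m') (hm't : m' ≤ t) (ht : t ≤ 1)
    (hsign : ∀ᵐ x, x ∈ Ioc m t → 0 ≤ h x) (hzero : ∀ᵐ x, x ∈ Ioc t 1 → h x = 0)
    (horth : ∫ x in (0:ℝ)..1, h x * V x = 0) :
    V m' * ∫ x in Ioc m' t, h x ≤ V m * ∫ x in Ioc 0 m, |h x| := by
  have hmem : ∀ {c d : ℝ}, 0 ≤ c → d ≤ 1 → ∀ x ∈ Ioc c d, x ∈ Icc (0:ℝ) 1 :=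
    fun hc hd x hx => ⟨hc.trans hx.1.le, hx.2.trans hd⟩
  have hhV : IntegrableOn (fun x => h x * V x) (Icc 0 1) :=
    hh.mul_continuousOn hV_cont isCompact_Icc
  have hii : ∀ {c d : ℝ}, c ∈ Icc (0:ℝ) 1 → d ∈ Icc (0:ℝ) 1 →
      IntervalIntegrable (fun x => h x * V x) volume c d := fun hc hd =>
    (hhV.mono_set (uIcc_subset_Icc hc hd)).intervalIntegrable
  have h0 : (0:ℝ) ∈ Icc (0:ℝ) 1 := ⟨le_rfl, zero_le_one⟩
  have h1 : (1:ℝ) ∈ Icc (0:ℝ) 1 := ⟨zero_le_one, le_rfl⟩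
  have hm1 : m ∈ Icc (0:ℝ) 1 := ⟨hm, by linarith⟩
  have hm'1 : m' ∈ Icc (0:ℝ) 1 := ⟨by linarith, by linarith⟩
  have ht1 : t ∈ Icc (0:ℝ) 1 := ⟨by linarith, ht⟩
  rw [← integral_add_adjacent_intervals (hii h0 hm1) (hii hm1 h1),
    ← integral_add_adjacent_intervals (hii hm1 hm'1) (hii hm'1 h1),
    ← integral_add_adjacent_intervals (hii hm'1 ht1) (hii ht1 h1),
    integral_of_le hm, integral_of_le hmm', integral_of_le hm't, integral_of_le ht] at horth
  have hA := abs_setIntegral_mul_le (C := V m) measurableSet_Ioc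
    (hh.mono_set fun x hx => hmem le_rfl hm1.2 x hx) fun x hx => by
      rw [abs_of_nonneg (hV_nonneg x (hmem le_rfl hm1.2 x hx))]
      exact hV_mono (hmem le_rfl hm1.2 x hx) hm1 hx.2
  have hB : 0 ≤ ∫ x in Ioc m m', h x * V x := by
    refine setIntegral_nonneg_of_ae_restrict ?_
    filter_upwards [ae_restrict_mem measurableSet_Ioc, ae_restrict_of_ae hsign] with x hx hs
    exact mul_nonneg (hs ⟨hx.1, hx.2.trans hm't⟩) (hV_nonneg x (hmem hm hm'1.2 x hx))
  have hC : V m' * ∫ x in Ioc m' t, h x ≤ ∫ x in Ioc m' t, h x * V x := by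
    rw [← MeasureTheory.integral_const_mul]
    refine integral_mono_ae ((hh.mono_set fun x hx => hmem hm'1.1 ht x hx).const_mul _)
      (hhV.mono_set fun x hx => hmem hm'1.1 ht x hx) ?_
    filter_upwards [ae_restrict_mem measurableSet_Ioc, ae_restrict_of_ae hsign] with x hx hs
    rw [mul_comm]
    exact mul_le_mul_of_nonneg_left (hV_mono hm'1 (hmem hm'1.1 ht x hx) hx.1.le)
      (hs ⟨hmm'.trans_lt hx.1, hx.2⟩)
  have hD : ∫ x in Ioc t 1, h x * V x = 0 := by
    refine integral_eq_zero_of_ae ?_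
    filter_upwards [ae_restrict_mem measurableSet_Ioc, ae_restrict_of_ae hzero] with x hx hz
    simp [hz hx]
  linarith [neg_abs_le (∫ x in Ioc 0 m, h x * V x)]

section Orthogonal

variable {ι : Type*} {U : ι → ℝ → ℝ} {h : ℝ → ℝ}

lemma ae_eq_zero_Ioc_of_nonneg_of_orthogonal (hh : IntegrableOn h (Icc 0 1))
    (hU_cont : ∀ i, ContinuousOn (U i) (Icc 0 1)) (hU_pos : ∀ i, ∀ x ∈ Icc (0:ℝ) 1, 0 < U i x)
    (hU_mono : ∀ i, MonotoneOn (U i) (Icc 0 1))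
    (hU_unbdd : ∀ a b, 0 ≤ a → a < b → b ≤ 1 → ∀ C, ∃ i, C * U i a ≤ U i b)
    (horth : ∀ i, ∫ x in (0:ℝ)..1, h x * U i x = 0) {m m' t : ℝ}
    (hm : 0 ≤ m) (hmm' : m < m') (hm't : m' ≤ t) (ht : t ≤ 1)
    (hsign : ∀ᵐ x, x ∈ Ioc m t → 0 ≤ h x) (hzero : ∀ᵐ x, x ∈ Ioc t 1 → h x = 0) :
    ∀ᵐ x, x ∈ Ioc m' t → h x = 0 := by
  set c := ∫ x in Ioc m' t, h x
  set H := ∫ x in Ioc 0 m, |h x|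
  have hsign' : 0 ≤ᵐ[volume.restrict (Ioc m' t)] h := by
    filter_upwards [ae_restrict_mem measurableSet_Ioc, ae_restrict_of_ae hsign] with x hx hs
    exact hs ⟨hmm'.trans hx.1, hx.2⟩
  suffices hc : c = 0 by
    refine (ae_restrict_iff' measurableSet_Ioc).1 ?_
    exact (integral_eq_zero_iff_of_nonneg_ae hsign' (hh.mono_set fun x hx =>
      ⟨hm.trans (hmm'.trans hx.1).le, hx.2.trans ht⟩)).1 hc
  refine le_antisymm (not_lt.1 fun hc => ?_) (integral_nonneg_of_ae hsign')
  obtain ⟨i, hi⟩ := hU_unbdd m m' hm hmm' (hm't.trans ht) (H / c + 1)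
  have hbound := mul_setIntegral_le_of_integral_mul_eq_zero hh (hU_cont i)
    (fun x hx => (hU_pos i x hx).le) (hU_mono i) hm hmm'.le hm't ht hsign hzero (horth i)
  have hUm := hU_pos i m ⟨hm, by linarith⟩
  have : (H + c) * U i m ≤ H * U i m := by
    calc (H + c) * U i m = (H / c + 1) * U i m * c := by field_simp
      _ ≤ U i m' * c := mul_le_mul_of_nonneg_right hi hc.le
      _ ≤ H * U i m := by linarith
  nlinarith

lemma ae_eq_zero_Ioc_of_orthogonal (hh : IntegrableOn h (Icc 0 1))
    (hU_cont : ∀ i, ContinuousOn (U i) (Icc 0 1)) (hU_pos : ∀ i, ∀ x ∈ Icc (0:ℝ) 1, 0 < U i x)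
    (hU_mono : ∀ i, MonotoneOn (U i) (Icc 0 1))
    (hU_unbdd : ∀ a b, 0 ≤ a → a < b → b ≤ 1 → ∀ C, ∃ i, C * U i a ≤ U i b)
    (horth : ∀ i, ∫ x in (0:ℝ)..1, h x * U i x = 0) {m t : ℝ} (hm : 0 ≤ m) (ht : t ≤ 1)
    (hsign : (∀ᵐ x, x ∈ Ioc m t → 0 ≤ h x) ∨ (∀ᵐ x, x ∈ Ioc m t → h x ≤ 0))
    (hzero : ∀ᵐ x, x ∈ Ioc t 1 → h x = 0) :
    ∀ᵐ x, x ∈ Ioc m t → h x = 0 := by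
  refine ae_mem_Ioc_of_forall_Ioo fun m' hm' => ?_
  rcases hsign with hpos | hneg
  · exact ae_eq_zero_Ioc_of_nonneg_of_orthogonal hh hU_cont hU_pos hU_mono hU_unbdd horth
      hm hm'.1 hm'.2.le ht hpos hzero
  · have := ae_eq_zero_Ioc_of_nonneg_of_orthogonal hh.neg hU_cont hU_pos hU_mono hU_unbdd
      (fun i => by simp only [Pi.neg_apply, neg_mul, intervalIntegral.integral_neg, horth i,
        neg_zero]) hm hm'.1 hm'.2.le ht
      (by filter_upwards [hneg] with x hx hmem using neg_nonneg.2 (hx hmem))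
      (by filter_upwards [hzero] with x hx hmem using neg_eq_zero.2 (hx hmem))
    filter_upwards [this] with x hx hmem using neg_eq_zero.1 (hx hmem)

theorem ae_eq_zero_of_orthogonal (hh : IntegrableOn h (Icc 0 1))
    (hU_cont : ∀ i, ContinuousOn (U i) (Icc 0 1)) (hU_pos : ∀ i, ∀ x ∈ Icc (0:ℝ) 1, 0 < U i x)
    (hU_mono : ∀ i, MonotoneOn (U i) (Icc 0 1))
    (hU_unbdd : ∀ a b, 0 ≤ a → a < b → b ≤ 1 → ∀ C, ∃ i, C * U i a ≤ U i b)
    (horth : ∀ i, ∫ x in (0:ℝ)..1, h x * U i x = 0) {n : ℕ} {z : ℕ → ℝ}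
    (hz0 : z 0 = 0) (hzn : z n = 1) (hz_mono : ∀ m < n, z m < z (m + 1))
    (h_sign : ∀ m < n,
      (∀ᵐ x, x ∈ Icc (z m) (z (m + 1)) → 0 ≤ h x) ∨
      (∀ᵐ x, x ∈ Icc (z m) (z (m + 1)) → h x ≤ 0)) :
    ∀ᵐ x, x ∈ Icc (0:ℝ) 1 → h x = 0 := by
  have hz : MonotoneOn z (Iic n) := (strictMonoOn_Iic_of_lt_succ hz_mono).monotoneOn
  have step : ∀ j < n, (∀ᵐ x, x ∈ Ioc (z (j + 1)) 1 → h x = 0) →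
      ∀ᵐ x, x ∈ Ioc (z j) 1 → h x = 0 := by
    intro j hj hzero
    have hzj : 0 ≤ z j := hz0 ▸ hz (Nat.zero_le n) hj.le (Nat.zero_le j)
    have hzj1 : z (j + 1) ≤ 1 :=
      hzn ▸ hz (Nat.succ_le_of_lt hj) (mem_Iic.2 le_rfl) (Nat.succ_le_of_lt hj)
    have hblock := ae_eq_zero_Ioc_of_orthogonal hh hU_cont hU_pos hU_mono hU_unbdd horth hzj
      hzj1 ((h_sign j hj).imp (fun hs => hs.mono fun x hx hmem => hx (Ioc_subset_Icc_self hmem))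
        (fun hs => hs.mono fun x hx hmem => hx (Ioc_subset_Icc_self hmem))) hzero
    filter_upwards [hblock, hzero] with x hblock hzero hx
    rcases le_or_gt x (z (j + 1)) with hle | hlt
    · exact hblock ⟨hx.1, hle⟩
    · exact hzero ⟨hlt, hx.2⟩
  have hvanish : ∀ᵐ x, x ∈ Ioc (z 0) 1 → h x = 0 :=
    Nat.decreasingInduction (motive := fun j _ => ∀ᵐ x, x ∈ Ioc (z j) 1 → h x = 0)
      (fun j hj => step j hj) (by simp [hzn]) (Nat.zero_le n)
  rw [hz0] at hvanish
  filter_upwards [hvanish, Ioc_ae_eq_Icc (a := (0:ℝ)) (b := 1) (μ := volume)] with x hx hIoc hmem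
  exact hx (hIoc.mpr hmem)

end Orthogonal

lemma IsVolterraSolution.exists_mul_le_mul {c0 : ℝ} {q1 q2 : ℝ → ℝ} {u1 u2 : ℝ → ℝ → ℝ}
    (hc0 : 0 < c0) (hq1 : ∀ x ∈ Icc (0:ℝ) 1, c0 ≤ q1 x) (hq1_int : IntegrableOn q1 (Icc 0 1))
    (hq2 : ∀ x ∈ Icc (0:ℝ) 1, 0 ≤ q2 x) (hq2_int : IntegrableOn q2 (Icc 0 1))
    (hu1 : ∀ k > 0, IsVolterraSolution k q1 (u1 k))
    (hu2 : ∀ k > 0, IsVolterraSolution k q2 (u2 k)) {a b : ℝ} (ha : 0 ≤ a) (hab : a < b)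
    (hb : b ≤ 1) (C : ℝ) : ∃ k > 0, C * (u1 k a * u2 k a) ≤ u1 k b * u2 k b := by
  have hgrowth : Tendsto (fun k : ℝ => 1 + k ^ 2 * (c0 * (b - a) ^ 2 / 2)) atTop atTop :=
    tendsto_atTop_add_const_left _ 1
      ((tendsto_pow_atTop two_ne_zero).atTop_mul_const (by have := sub_pos.2 hab; positivity))
  obtain ⟨k, hkC, hk⟩ := ((hgrowth.eventually_ge_atTop C).and (eventually_gt_atTop 0)).exists
  have ha' : a ∈ Icc (0:ℝ) 1 := ⟨ha, by linarith⟩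
  have hb' : b ∈ Icc (0:ℝ) 1 := ⟨by linarith, hb⟩
  have hq1_nonneg : ∀ x ∈ Icc (0:ℝ) 1, 0 ≤ q1 x := fun x hx => hc0.le.trans (hq1 x hx)
  have hu1a := (hu1 k hk).pos hq1_nonneg ha'
  have hu2a := (hu2 k hk).pos hq2 ha'
  refine ⟨k, hk, ?_⟩
  calc C * (u1 k a * u2 k a)
      ≤ u1 k a * (1 + k ^ 2 * (c0 * (b - a) ^ 2 / 2)) * u2 k a := by
        rw [← mul_assoc, mul_comm C]
        gcongr
    _ ≤ u1 k b * u2 k b :=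
        mul_le_mul ((hu1 k hk).mul_one_add_le hc0.le hq1 hq1_int ha' hb' hab.le)
          ((hu2 k hk).monotoneOn hq2 hq2_int ha' hb' hab.le) hu2a.le
          ((hu1 k hk).pos hq1_nonneg hb').le

theorem property_C_general
    (c0 c1 : ℝ) (hc0 : 0 < c0)
    (q1 q2 : ℝ → ℝ) (hq1_meas : Measurable q1) (hq2_meas : Measurable q2)
    (hq1_bnd : ∀ x ∈ Set.Icc (0:ℝ) 1, c0 ≤ q1 x ∧ q1 x ≤ c1)
    (hq2_bnd : ∀ x ∈ Set.Icc (0:ℝ) 1, c0 ≤ q2 x ∧ q2 x ≤ c1)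
    (u1 u2 : ℝ → ℝ → ℝ)
    (hu1_cont : ∀ k > 0, ContinuousOn (u1 k) (Set.Icc (0:ℝ) 1))
    (hu2_cont : ∀ k > 0, ContinuousOn (u2 k) (Set.Icc (0:ℝ) 1))
    (hu1 : ∀ k > 0, ∀ x ∈ Set.Icc (0:ℝ) 1,
      u1 k x = 1 + k ^ 2 * ∫ s in (0:ℝ)..x, (x - s) * q1 s * u1 k s)
    (hu2 : ∀ k > 0, ∀ x ∈ Set.Icc (0:ℝ) 1,
      u2 k x = 1 + k ^ 2 * ∫ s in (0:ℝ)..x, (x - s) * q2 s * u2 k s)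
    (h : ℝ → ℝ) (hh_int : IntegrableOn h (Set.Icc (0:ℝ) 1))
    (n : ℕ) (z : ℕ → ℝ)
    (hz0 : z 0 = 0) (hzn : z n = 1)
    (hz_mono : ∀ m < n, z m < z (m + 1))
    (h_sign : ∀ m < n,
      (∀ᵐ x, x ∈ Set.Icc (z m) (z (m + 1)) → 0 ≤ h x) ∨
      (∀ᵐ x, x ∈ Set.Icc (z m) (z (m + 1)) → h x ≤ 0))
    (horth : ∀ k > (0:ℝ), ∫ x in (0:ℝ)..1, h x * u1 k x * u2 k x = 0) :
    ∀ᵐ x, x ∈ Set.Icc (0:ℝ) 1 → h x = 0 := by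
  have hq1_int := hq1_meas.integrableOn_Icc_of_bounds hq1_bnd
  have hq2_int := hq2_meas.integrableOn_Icc_of_bounds hq2_bnd
  have hq1_nonneg : ∀ x ∈ Icc (0:ℝ) 1, 0 ≤ q1 x := fun x hx => hc0.le.trans (hq1_bnd x hx).1
  have hq2_nonneg : ∀ x ∈ Icc (0:ℝ) 1, 0 ≤ q2 x := fun x hx => hc0.le.trans (hq2_bnd x hx).1
  have hv1 : ∀ k > 0, IsVolterraSolution k q1 (u1 k) := fun k hk => ⟨hu1_cont k hk, hu1 k hk⟩
  have hv2 : ∀ k > 0, IsVolterraSolution k q2 (u2 k) := fun k hk => ⟨hu2_cont k hk, hu2 k hk⟩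
  refine ae_eq_zero_of_orthogonal (U := fun (k : Ioi (0:ℝ)) x => u1 k x * u2 k x) hh_int
    (fun k => (hv1 k k.2).1.mul (hv2 k k.2).1)
    (fun k x hx => mul_pos ((hv1 k k.2).pos hq1_nonneg hx) ((hv2 k k.2).pos hq2_nonneg hx))
    (fun k => ((hv1 k k.2).monotoneOn hq1_nonneg hq1_int).mul
      ((hv2 k k.2).monotoneOn hq2_nonneg hq2_int) (fun x hx => ((hv1 k k.2).pos hq1_nonneg hx).le)
      fun x hx => ((hv2 k k.2).pos hq2_nonneg hx).le)
    (fun a b ha hab hb C => ?_) (fun k => by simpa only [mul_assoc] using horth k k.2)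
    hz0 hzn hz_mono h_sign
  obtain ⟨k, hk, hC⟩ := IsVolterraSolution.exists_mul_le_mul hc0 (fun x hx => (hq1_bnd x hx).1)
    hq1_int hq2_nonneg hq2_int hv1 hv2 ha hab hb C
  exact ⟨⟨k, hk⟩, hC⟩

/-- Theorem 1, Property C: if `h` is integrable on `[0,1]`, keeps a
fixed sign a.e. on each subinterval of a finite partition `0 = z₀ < z₁ < ⋯ < zₙ = 1`,
and `∫₀¹ h(x) u₁(x,k) u₂(x,k) dx = 0` for all `k > 0` (where `u_j(·,k)` are the
solutions of the Volterra equations with coefficients `q_j`), then `h = 0` a.e.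
on `[0,1]`. -/
theorem property_C
    (c0 c1 : ℝ) (hc0 : 0 < c0) (hc1 : 0 < c1)
    (q1 q2 : ℝ → ℝ) (hq1_meas : Measurable q1) (hq2_meas : Measurable q2)
    (hq1_bnd : ∀ x ∈ Set.Icc (0:ℝ) 1, c0 ≤ q1 x ∧ q1 x ≤ c1)
    (hq2_bnd : ∀ x ∈ Set.Icc (0:ℝ) 1, c0 ≤ q2 x ∧ q2 x ≤ c1)
    (u1 u2 : ℝ → ℝ → ℝ)
    (hu1_cont : ∀ k > 0, ContinuousOn (u1 k) (Set.Icc (0:ℝ) 1))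
    (hu2_cont : ∀ k > 0, ContinuousOn (u2 k) (Set.Icc (0:ℝ) 1))
    (hu1 : ∀ k > 0, ∀ x ∈ Set.Icc (0:ℝ) 1,
      u1 k x = 1 + k ^ 2 * ∫ s in (0:ℝ)..x, (x - s) * q1 s * u1 k s)
    (hu2 : ∀ k > 0, ∀ x ∈ Set.Icc (0:ℝ) 1,
      u2 k x = 1 + k ^ 2 * ∫ s in (0:ℝ)..x, (x - s) * q2 s * u2 k s)
    (h : ℝ → ℝ) (hh_int : IntegrableOn h (Set.Icc (0:ℝ) 1))
    (n : ℕ) (hn : 0 < n) (z : ℕ → ℝ)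
    (hz0 : z 0 = 0) (hzn : z n = 1)
    (hz_mono : ∀ m < n, z m < z (m + 1))
    (h_sign : ∀ m < n,
      (∀ᵐ x, x ∈ Set.Icc (z m) (z (m + 1)) → 0 ≤ h x) ∨
      (∀ᵐ x, x ∈ Set.Icc (z m) (z (m + 1)) → h x ≤ 0))
    (horth : ∀ k > (0:ℝ), ∫ x in (0:ℝ)..1, h x * u1 k x * u2 k x = 0) :
    ∀ᵐ x, x ∈ Set.Icc (0:ℝ) 1 → h x = 0 :=
  property_C_general c0 c1 hc0 q1 q2 hq1_meas hq2_meas hq1_bnd hq2_bnd u1 u2 hu1_cont hu2_cont hu1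
    hu2 h hh_int n z hz0 hzn hz_mono h_sign horth
end

section
/- Let $c_0, c_1 > 0$ and let $q : [0,1] \to \mathbb{R}$ be measurable with $c_0 \le q(x) \le c_1$ on $[0,1]$. For each $k > 0$ let $u(\cdot,k)$ be the continuous solution of $u(x,k) = 1 + k^2 \int_0^x (x-s) q(s) u(s,k)\,ds$. Then $u(x,k)$ is monotone nondecreasing in $k$: for all $0 < k_1 \le k_2$ and all $x \in [0,1]$, $u(x,k_1) \le u(x,k_2)$. -/
open MeasureTheory intervalIntegral Set

/-!
Both the solution `u(·,k₂)` and the difference `w = u(·,k₂) - u(·,k₁)` are supersolutions of a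
homogeneous Volterra inequality: `u(·,k₂) ≥ k₂² ∫₀ˣ (x-s) q u(s,k₂) ds` trivially, and, once
`u(·,k₂) ≥ 0`,
`w(x) = (k₂² - k₁²) ∫₀ˣ (x-s) q u(s,k₂) ds + k₁² ∫₀ˣ (x-s) q w ds ≥ k₁² ∫₀ˣ (x-s) q w ds`.
A supersolution `w(x) ≥ K ∫ₐˣ (x-s) q w ds` on `[a,b]` with `K ≥ 0`, `0 ≤ q ≤ c` is nonnegative:
its negative part `f` satisfies `f(x) ≤ K c (b-a) ∫ₐˣ f`, and Grönwall's inequality for the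
primitive `∫ₐˣ f` forces `f = 0`.
-/

section Gronwall

variable {f : ℝ → ℝ} {a b K : ℝ}

theorem hasDerivWithinAt_integral_of_continuousOn_Icc (hf : ContinuousOn f (Icc a b))
    {x : ℝ} (hx : x ∈ Icc a b) :
    HasDerivWithinAt (fun y => ∫ s in a..y, f s) (f x) (Icc a b) x := by
  have := Fact.mk hx
  exact integral_hasDerivWithinAt_right
    ((hf.mono (Icc_subset_Icc le_rfl hx.2)).intervalIntegrable_of_Icc hx.1)
    (hf.stronglyMeasurableAtFilter_nhdsWithin measurableSet_Icc x) (hf.continuousWithinAt hx)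

theorem eq_zero_of_nonneg_of_le_mul_integral (hf : ContinuousOn f (Icc a b))
    (hf₀ : ∀ x ∈ Icc a b, 0 ≤ f x) (h : ∀ x ∈ Icc a b, f x ≤ K * ∫ s in a..x, f s) :
    ∀ x ∈ Icc a b, f x = 0 := by
  set F : ℝ → ℝ := fun y => ∫ s in a..y, f s
  have hF' : ∀ x ∈ Icc a b, HasDerivWithinAt F (f x) (Icc a b) x := fun x hx =>
    hasDerivWithinAt_integral_of_continuousOn_Icc hf hx
  have hF_zero : ∀ x ∈ Icc a b, F x = 0 := by
    refine eq_zero_of_abs_deriv_le_mul_abs_self_of_eq_zero_right (K := |K|)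
      (fun x hx => (hF' x hx).continuousWithinAt)
      (fun x hx => (hF' x (Ico_subset_Icc_self hx)).mono_of_mem_nhdsWithin
        (Icc_mem_nhdsGE_of_mem hx)) integral_same fun x hx => ?_
    have hx' := Ico_subset_Icc_self hx
    rw [Real.norm_of_nonneg (hf₀ x hx'), Real.norm_eq_abs, ← abs_mul]
    exact (h x hx').trans (le_abs_self _)
  intro x hx
  have := h x hx
  rw [show (∫ s in a..x, f s) = 0 from hF_zero x hx, mul_zero] at this
  exact le_antisymm this (hf₀ x hx)

end Gronwall

section Volterra

variable {q w : ℝ → ℝ} {a b c K : ℝ}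

theorem intervalIntegrable_volterra_integrand (hq : IntervalIntegrable q volume a b)
    (hw : ContinuousOn w (Icc a b)) {x : ℝ} (hx : x ∈ Icc a b) :
    IntervalIntegrable (fun s => (x - s) * q s * w s) volume a x := by
  have hsub : uIcc a x ⊆ uIcc a b := by
    rw [uIcc_of_le hx.1, uIcc_of_le (hx.1.trans hx.2)]
    exact Icc_subset_Icc le_rfl hx.2
  exact ((hq.mono_set hsub).continuousOn_mul (continuousOn_const.sub continuousOn_id))
    |>.mul_continuousOn (hw.mono (by rwa [uIcc_of_le (hx.1.trans hx.2)] at hsub))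

theorem nonneg_of_le_volterra (hq : IntervalIntegrable q volume a b)
    (hq₀ : ∀ s ∈ Icc a b, 0 ≤ q s) (hqc : ∀ s ∈ Icc a b, q s ≤ c) (hK : 0 ≤ K)
    (hw : ContinuousOn w (Icc a b))
    (h : ∀ x ∈ Icc a b, K * ∫ s in a..x, (x - s) * q s * w s ≤ w x) :
    ∀ x ∈ Icc a b, 0 ≤ w x := by
  set f : ℝ → ℝ := fun s => max (-w s) 0
  have hf : ContinuousOn f (Icc a b) := hw.neg.sup continuousOn_const
  have hf₀ : ∀ x, 0 ≤ f x := fun x => le_max_right _ _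
  suffices hf_le : ∀ x ∈ Icc a b, f x ≤ K * (c * (b - a)) * ∫ s in a..x, f s by
    intro x hx
    have := eq_zero_of_nonneg_of_le_mul_integral hf (fun x _ => hf₀ x) hf_le x hx
    linarith [le_max_left (-w x) 0]
  intro x hx
  have hab : a ∈ Icc a b := ⟨le_rfl, hx.1.trans hx.2⟩
  have hc : 0 ≤ c := (hq₀ a hab).trans (hqc a hab)
  have hkernel : -∫ s in a..x, (x - s) * q s * w s ≤ c * (b - a) * ∫ s in a..x, f s := by
    rw [← intervalIntegral.integral_neg, ← intervalIntegral.integral_const_mul]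
    refine integral_mono_on hx.1 (intervalIntegrable_volterra_integrand hq hw hx).neg
      (((hf.mono (Icc_subset_Icc le_rfl hx.2)).intervalIntegrable_of_Icc hx.1).const_mul _)
      fun s hs => ?_
    have hs' : s ∈ Icc a b := ⟨hs.1, hs.2.trans hx.2⟩
    have hxs : 0 ≤ x - s := sub_nonneg.2 hs.2
    have hxs' : x - s ≤ b - a := by linarith [hs.1, hx.2]
    calc -((x - s) * q s * w s) = (x - s) * q s * -w s := by ring
      _ ≤ (x - s) * q s * f s := by
        gcongr
        · exact mul_nonneg hxs (hq₀ s hs')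
        · exact le_max_left _ _
      _ ≤ (b - a) * c * f s :=
        mul_le_mul_of_nonneg_right (mul_le_mul hxs' (hqc s hs') (hq₀ s hs') (hxs.trans hxs'))
          (hf₀ s)
      _ = c * (b - a) * f s := by ring
  refine max_le ?_ <| mul_nonneg (mul_nonneg hK (mul_nonneg hc (sub_nonneg.2 hab.2)))
    (integral_nonneg hx.1 fun s _ => hf₀ s)
  calc -w x ≤ K * -∫ s in a..x, (x - s) * q s * w s := by linarith [h x hx]
    _ ≤ K * (c * (b - a) * ∫ s in a..x, f s) := by gcongr
    _ = K * (c * (b - a)) * ∫ s in a..x, f s := by ring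

end Volterra

theorem intervalIntegrable_of_measurable_of_abs_le {q : ℝ → ℝ} {a b c : ℝ} (hab : a ≤ b)
    (hq : Measurable q) (hqc : ∀ s ∈ Icc a b, |q s| ≤ c) : IntervalIntegrable q volume a b :=
  (intervalIntegrable_iff_integrableOn_Icc_of_le hab).2 <|
    Measure.integrableOn_of_bounded measure_Icc_lt_top.ne hq.aestronglyMeasurable <|
      (ae_restrict_iff' measurableSet_Icc).2 <| .of_forall hqc

theorem volterra_solution_monotone_in_k_general
    (c0 c1 : ℝ) (hc0 : 0 < c0)
    (q : ℝ → ℝ) (hq_meas : Measurable q)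
    (hq_bnd : ∀ x ∈ Set.Icc (0:ℝ) 1, c0 ≤ q x ∧ q x ≤ c1)
    (u : ℝ → ℝ → ℝ)
    (hu_cont : ∀ k > 0, ContinuousOn (u k) (Set.Icc (0:ℝ) 1))
    (hu : ∀ k > 0, ∀ x ∈ Set.Icc (0:ℝ) 1,
      u k x = 1 + k ^ 2 * ∫ s in (0:ℝ)..x, (x - s) * q s * u k s) :
    ∀ k₁ k₂ : ℝ, 0 < k₁ → k₁ ≤ k₂ → ∀ x ∈ Set.Icc (0:ℝ) 1, u k₁ x ≤ u k₂ x := by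
  intro k₁ k₂ hk₁ hk₁₂
  have hk₂ : 0 < k₂ := hk₁.trans_le hk₁₂
  have hq₀ : ∀ s ∈ Icc (0:ℝ) 1, 0 ≤ q s := fun s hs => hc0.le.trans (hq_bnd s hs).1
  have hqc : ∀ s ∈ Icc (0:ℝ) 1, q s ≤ c1 := fun s hs => (hq_bnd s hs).2
  have hq_int : IntervalIntegrable q volume 0 1 :=
    intervalIntegrable_of_measurable_of_abs_le zero_le_one hq_meas fun s hs =>
      (abs_of_nonneg (hq₀ s hs)).trans_le (hqc s hs)
  have hu₂_nonneg : ∀ x ∈ Icc (0:ℝ) 1, 0 ≤ u k₂ x :=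
    nonneg_of_le_volterra hq_int hq₀ hqc (sq_nonneg k₂) (hu_cont k₂ hk₂) fun x hx => by
      rw [hu k₂ hk₂ x hx]; linarith
  have hdiff : ∀ x ∈ Icc (0:ℝ) 1, 0 ≤ u k₂ x - u k₁ x := by
    refine nonneg_of_le_volterra hq_int hq₀ hqc (sq_nonneg k₁)
      ((hu_cont k₂ hk₂).sub (hu_cont k₁ hk₁)) fun x hx => ?_
    have hI₂ : 0 ≤ ∫ s in (0:ℝ)..x, (x - s) * q s * u k₂ s :=
      integral_nonneg hx.1 fun s hs => mul_nonneg (mul_nonneg (sub_nonneg.2 hs.2)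
        (hq₀ s ⟨hs.1, hs.2.trans hx.2⟩)) (hu₂_nonneg s ⟨hs.1, hs.2.trans hx.2⟩)
    have hk_sq : k₁ ^ 2 ≤ k₂ ^ 2 := pow_le_pow_left₀ hk₁.le hk₁₂ 2
    simp only [mul_sub]
    rw [integral_sub (intervalIntegrable_volterra_integrand hq_int (hu_cont k₂ hk₂) hx)
      (intervalIntegrable_volterra_integrand hq_int (hu_cont k₁ hk₁) hx),
      hu k₂ hk₂ x hx, hu k₁ hk₁ x hx]
    linarith [mul_le_mul_of_nonneg_right hk_sq hI₂]
  exact fun x hx => sub_nonneg.1 (hdiff x hx)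

/-- The Volterra solution `u(x,k)` is monotone nondecreasing in `k`:
for `0 < k₁ ≤ k₂` and `x ∈ [0,1]`, `u(x,k₁) ≤ u(x,k₂)`. -/
theorem volterra_solution_monotone_in_k
    (c0 c1 : ℝ) (hc0 : 0 < c0) (hc1 : 0 < c1)
    (q : ℝ → ℝ) (hq_meas : Measurable q)
    (hq_bnd : ∀ x ∈ Set.Icc (0:ℝ) 1, c0 ≤ q x ∧ q x ≤ c1)
    (u : ℝ → ℝ → ℝ)
    (hu_cont : ∀ k > 0, ContinuousOn (u k) (Set.Icc (0:ℝ) 1))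
    (hu : ∀ k > 0, ∀ x ∈ Set.Icc (0:ℝ) 1,
      u k x = 1 + k ^ 2 * ∫ s in (0:ℝ)..x, (x - s) * q s * u k s) :
    ∀ k₁ k₂ : ℝ, 0 < k₁ → k₁ ≤ k₂ → ∀ x ∈ Set.Icc (0:ℝ) 1, u k₁ x ≤ u k₂ x :=
  volterra_solution_monotone_in_k_general c0 c1 hc0 q hq_meas hq_bnd u hu_cont hu
end

section
/- Let $c_0, c_1 > 0$, $k > 0$, and let $q : [0,1] \to \mathbb{R}$ be measurable with $c_0 \le q(x) \le c_1$ on $[0,1]$, and let $u : [0,1] \to \mathbb{R}$ be the continuous solution of $u(x) = 1 + k^2 \int_0^x (x-s) q(s) u(s)\,ds$. Then for all $0 \le y \le x \le 1$, $\frac{u(x)}{u(y)} \ge 1 + \frac{1}{2} k^2 c_0 (x-y)^2$. -/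
/-!
If `u` vanished somewhere in `[0, 1]`, then up to its first zero the integrand `(x - s) q u`
would be nonnegative, forcing `u ≥ 1` at that zero; hence `u > 0`. Writing `x - s = (y - s) + (x - y)`
splits the equation as
`u x = u y + k² ((x - y) ∫₀ʸ q u + ∫ᵧˣ (x - s) q u)`,
so `u` is increasing, and then `∫ᵧˣ (x - s) q u ≥ c₀ u(y) ∫ᵧˣ (x - s) = c₀ u(y) (x - y)² / 2`.
-/

open MeasureTheory intervalIntegral Set

theorem ContinuousOn.forall_mem_Icc_pos {u : ℝ → ℝ} {a b : ℝ} (hu : ContinuousOn u (Icc a b))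
    (hstep : ∀ X ∈ Icc a b, (∀ s ∈ Ico a X, 0 < u s) → 0 < u X) :
    ∀ t ∈ Icc a b, 0 < u t := by
  by_contra! ⟨t, ht, hut⟩
  set B := Icc a b ∩ u ⁻¹' Iic 0
  have hB_bdd : BddBelow B := ⟨a, fun _ hs => hs.1.1⟩
  have hXB : sInf B ∈ B :=
    (hu.preimage_isClosed_of_isClosed isClosed_Icc isClosed_Iic).csInf_mem ⟨t, ht, hut⟩ hB_bdd
  refine (hstep _ hXB.1 fun s hs => not_le.1 fun hus => hs.2.not_ge ?_).not_ge hXB.2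
  exact csInf_le hB_bdd ⟨⟨hs.1, hs.2.le.trans hXB.1.2⟩, hus⟩

theorem integral_sub_mul_eq {f : ℝ → ℝ} {a x y : ℝ}
    (hf₁ : IntervalIntegrable f volume a y) (hf₂ : IntervalIntegrable f volume y x) :
    ∫ s in a..x, (x - s) * f s =
      (∫ s in a..y, (y - s) * f s) + (x - y) * (∫ s in a..y, f s) + ∫ s in y..x, (x - s) * f s := by
  rw [← integral_add_adjacent_intervals (hf₁.continuousOn_mul (g := (x - ·)) (by fun_prop))
    (hf₂.continuousOn_mul (by fun_prop)), ← intervalIntegral.integral_const_mul,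
    ← integral_add (hf₁.continuousOn_mul (g := (y - ·)) (by fun_prop)) (hf₁.const_mul _)]
  congr 1
  exact integral_congr fun s _ => by ring

theorem mul_sq_div_two_le_integral_sub_mul {g : ℝ → ℝ} {m x y : ℝ} (hyx : y ≤ x)
    (hg : IntervalIntegrable g volume y x) (hm : ∀ s ∈ Icc y x, m ≤ g s) :
    m * (x - y) ^ 2 / 2 ≤ ∫ s in y..x, (x - s) * g s := by
  have hlin : ∫ s in y..x, (x - s) * m = m * (x - y) ^ 2 / 2 := by
    rw [intervalIntegral.integral_mul_const,
      integral_sub intervalIntegrable_const intervalIntegrable_id,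
      intervalIntegral.integral_const, integral_id, smul_eq_mul]
    ring
  rw [← hlin]
  refine integral_mono_on hyx (Continuous.intervalIntegrable (by fun_prop) _ _)
    (hg.continuousOn_mul (by fun_prop)) fun s hs => ?_
  exact mul_le_mul_of_nonneg_left (hm s hs) (sub_nonneg.2 hs.2)

theorem integrableOn_Icc_mul_of_bounded {q u : ℝ → ℝ} {a b C : ℝ} (hq_meas : Measurable q)
    (hq_bdd : ∀ s ∈ Icc a b, ‖q s‖ ≤ C) (hu : ContinuousOn u (Icc a b)) :
    IntegrableOn (fun s => q s * u s) (Icc a b) :=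
  (hu.integrableOn_compact isCompact_Icc).bdd_mul hq_meas.aestronglyMeasurable
    ((ae_restrict_iff' measurableSet_Icc).2 (Filter.Eventually.of_forall hq_bdd))

section Volterra

variable {q u : ℝ → ℝ} {k b : ℝ}

theorem volterra_pos (hq : ∀ s ∈ Icc 0 b, 0 ≤ q s) (hu_cont : ContinuousOn u (Icc 0 b))
    (hu : ∀ x ∈ Icc 0 b, u x = 1 + k ^ 2 * ∫ s in (0:ℝ)..x, (x - s) * q s * u s) :
    ∀ t ∈ Icc 0 b, 0 < u t := by
  refine hu_cont.forall_mem_Icc_pos fun X hX hpos => ?_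
  have hint : 0 ≤ ∫ s in (0:ℝ)..X, (X - s) * q s * u s := by
    refine integral_nonneg hX.1 fun s hs => ?_
    rcases hs.2.eq_or_lt with rfl | hsX
    · simp
    · exact mul_nonneg (mul_nonneg (sub_nonneg.2 hs.2) (hq s ⟨hs.1, hs.2.trans hX.2⟩))
        (hpos s ⟨hs.1, hsX⟩).le
  rw [hu X hX]
  positivity

theorem volterra_eq_add (hqu : IntegrableOn (fun s => q s * u s) (Icc 0 b))
    (hu : ∀ x ∈ Icc 0 b, u x = 1 + k ^ 2 * ∫ s in (0:ℝ)..x, (x - s) * q s * u s)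
    {x y : ℝ} (hy : 0 ≤ y) (hyx : y ≤ x) (hxb : x ≤ b) :
    u x = u y + k ^ 2 * ((x - y) * (∫ s in (0:ℝ)..y, q s * u s) +
      ∫ s in y..x, (x - s) * q s * u s) := by
  have hint : ∀ c d, 0 ≤ c → c ≤ d → d ≤ b → IntervalIntegrable (fun s => q s * u s) volume c d :=
    fun c d hc hcd hdb => (intervalIntegrable_iff_integrableOn_Icc_of_le hcd).2
      (hqu.mono_set (Icc_subset_Icc hc hdb))
  simp only [mul_assoc] at hu ⊢
  rw [hu x ⟨hy.trans hyx, hxb⟩, hu y ⟨hy, hyx.trans hxb⟩,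
    integral_sub_mul_eq (hint 0 y le_rfl hy (hyx.trans hxb)) (hint y x hy hyx hxb)]
  ring

theorem volterra_add_le (hq : ∀ s ∈ Icc 0 b, 0 ≤ q s)
    (hqu : IntegrableOn (fun s => q s * u s) (Icc 0 b)) (hu_cont : ContinuousOn u (Icc 0 b))
    (hu : ∀ x ∈ Icc 0 b, u x = 1 + k ^ 2 * ∫ s in (0:ℝ)..x, (x - s) * q s * u s)
    {x y : ℝ} (hy : 0 ≤ y) (hyx : y ≤ x) (hxb : x ≤ b) :
    u y + k ^ 2 * ∫ s in y..x, (x - s) * q s * u s ≤ u x := by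
  have hpos := volterra_pos hq hu_cont hu
  have hrest : 0 ≤ ∫ s in (0:ℝ)..y, q s * u s := integral_nonneg hy fun s hs =>
    mul_nonneg (hq s ⟨hs.1, hs.2.trans (hyx.trans hxb)⟩) (hpos s ⟨hs.1, hs.2.trans (hyx.trans hxb)⟩).le
  rw [volterra_eq_add hqu hu hy hyx hxb]
  gcongr
  exact le_add_of_nonneg_left (mul_nonneg (sub_nonneg.2 hyx) hrest)

theorem volterra_monotoneOn (hq : ∀ s ∈ Icc 0 b, 0 ≤ q s)
    (hqu : IntegrableOn (fun s => q s * u s) (Icc 0 b)) (hu_cont : ContinuousOn u (Icc 0 b))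
    (hu : ∀ x ∈ Icc 0 b, u x = 1 + k ^ 2 * ∫ s in (0:ℝ)..x, (x - s) * q s * u s) :
    MonotoneOn u (Icc 0 b) := by
  intro y hy x hx hyx
  have hpos := volterra_pos hq hu_cont hu
  have hint : 0 ≤ ∫ s in y..x, (x - s) * q s * u s := integral_nonneg hyx fun s hs =>
    mul_nonneg (mul_nonneg (sub_nonneg.2 hs.2) (hq s ⟨hy.1.trans hs.1, hs.2.trans hx.2⟩))
      (hpos s ⟨hy.1.trans hs.1, hs.2.trans hx.2⟩).le
  calc u y ≤ u y + k ^ 2 * ∫ s in y..x, (x - s) * q s * u s :=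
        le_add_of_nonneg_right (mul_nonneg (sq_nonneg k) hint)
    _ ≤ u x := volterra_add_le hq hqu hu_cont hu hy.1 hyx hx.2

end Volterra

theorem volterra_solution_ratio_lower_bound_general
    (c0 c1 k : ℝ) (hc0 : 0 < c0)
    (q : ℝ → ℝ) (hq_meas : Measurable q)
    (hq_bnd : ∀ x ∈ Set.Icc (0:ℝ) 1, c0 ≤ q x ∧ q x ≤ c1)
    (u : ℝ → ℝ) (hu_cont : ContinuousOn u (Set.Icc (0:ℝ) 1))
    (hu : ∀ x ∈ Set.Icc (0:ℝ) 1,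
      u x = 1 + k ^ 2 * ∫ s in (0:ℝ)..x, (x - s) * q s * u s) :
    ∀ y x : ℝ, 0 ≤ y → y ≤ x → x ≤ 1 →
      1 + (1 / 2) * k ^ 2 * c0 * (x - y) ^ 2 ≤ u x / u y := by
  intro y x hy hyx hx1
  have hq : ∀ s ∈ Icc (0:ℝ) 1, 0 ≤ q s := fun s hs => hc0.le.trans (hq_bnd s hs).1
  have hq_norm : ∀ s ∈ Icc (0:ℝ) 1, ‖q s‖ ≤ c1 := fun s hs => by
    rw [Real.norm_of_nonneg (hq s hs)]
    exact (hq_bnd s hs).2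
  have hqu := integrableOn_Icc_mul_of_bounded hq_meas hq_norm hu_cont
  have hpos := volterra_pos hq hu_cont hu
  have hmono := volterra_monotoneOn hq hqu hu_cont hu
  have hy1 : y ∈ Icc (0:ℝ) 1 := ⟨hy, hyx.trans hx1⟩
  have hlow : c0 * u y * (x - y) ^ 2 / 2 ≤ ∫ s in y..x, (x - s) * q s * u s := by
    have hyx_int : IntervalIntegrable (fun s => q s * u s) volume y x :=
      (intervalIntegrable_iff_integrableOn_Icc_of_le hyx).2 (hqu.mono_set (Icc_subset_Icc hy hx1))
    refine (mul_sq_div_two_le_integral_sub_mul hyx hyx_int fun s hs => ?_).trans_eq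
      (integral_congr fun s _ => (mul_assoc _ _ _).symm)
    have hs1 : s ∈ Icc (0:ℝ) 1 := ⟨hy.trans hs.1, hs.2.trans hx1⟩
    calc c0 * u y ≤ c0 * u s := mul_le_mul_of_nonneg_left (hmono hy1 hs1 hs.1) hc0.le
      _ ≤ q s * u s := mul_le_mul_of_nonneg_right (hq_bnd s hs1).1 (hpos s hs1).le
  rw [le_div_iff₀ (hpos y hy1)]
  linarith [volterra_add_le hq hqu hu_cont hu hy hyx hx1, mul_le_mul_of_nonneg_left hlow (sq_nonneg k)]

/-- For the Volterra solution `u` and `0 ≤ y ≤ x ≤ 1`,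
`u(x)/u(y) ≥ 1 + (1/2) k² c₀ (x-y)²`. -/
theorem volterra_solution_ratio_lower_bound
    (c0 c1 k : ℝ) (hc0 : 0 < c0) (hc1 : 0 < c1) (hk : 0 < k)
    (q : ℝ → ℝ) (hq_meas : Measurable q)
    (hq_bnd : ∀ x ∈ Set.Icc (0:ℝ) 1, c0 ≤ q x ∧ q x ≤ c1)
    (u : ℝ → ℝ) (hu_cont : ContinuousOn u (Set.Icc (0:ℝ) 1))
    (hu : ∀ x ∈ Set.Icc (0:ℝ) 1,
      u x = 1 + k ^ 2 * ∫ s in (0:ℝ)..x, (x - s) * q s * u s) :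
    ∀ y x : ℝ, 0 ≤ y → y ≤ x → x ≤ 1 →
      1 + (1 / 2) * k ^ 2 * c0 * (x - y) ^ 2 ≤ u x / u y :=
  volterra_solution_ratio_lower_bound_general c0 c1 k hc0 q hq_meas hq_bnd u hu_cont hu
end

section
/- Let $c_0, c_1 > 0$, $k > 0$, and let $q_1, q_2 : [0,1] \to \mathbb{R}$ be measurable with $c_0 \le q_j(x) \le c_1$ on $[0,1]$, $j=1,2$. Let $u_j$ be the continuous solution of $u_j(x) = 1 + k^2 \int_0^x (x-s) q_j(s) u_j(s)\,ds$. Let $h : [0,1] \to \mathbb{R}$ be integrable, let $0 \le z < 1$, and suppose $h(x) \ge 0$ for almost every $x \in [z,1]$ and $\int_0^1 h(x) u_1(x) u_2(x)\,dx = 0$. Then for every $y \in (z,1)$, $\int_y^1 h(x)\,dx \le \frac{u_1(z) u_2(z)}{u_1(y) u_2(y)} \int_0^z |h(x)|\,dx$. -/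
/-!
Since `u x = 1 + k² ∫₀ˣ (x - s) q u` and the kernel `x - s` grows with `x`, `u` is nondecreasing
on any interval where `q u ≥ 0`; applied up to the first zero of `u`, this shows `u ≥ 1 > 0`, so
`u` is positive and nondecreasing on `[0,1]`, and so is `w = u₁ u₂`. Splitting `0 = ∫₀¹ h w` at
`z` and `y`: the middle piece is nonnegative, the tail is at least `w y ∫_y¹ h` by monotonicity,
and the head is at least `-w z ∫₀ᶻ |h|` because `0 ≤ w ≤ w z` on `[0,z]`.
-/

open MeasureTheory intervalIntegral Set

theorem integrableOn_of_measurable_of_forall_mem_bounds {q : ℝ → ℝ} {s : Set ℝ} {c0 c1 : ℝ}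
    (hs : MeasurableSet s) (hs_fin : volume s ≠ ⊤) (hq : Measurable q)
    (hbnd : ∀ x ∈ s, c0 ≤ q x ∧ q x ≤ c1) :
    IntegrableOn q s := by
  refine Measure.integrableOn_of_bounded (M := max |c0| |c1|) hs_fin hq.aestronglyMeasurable ?_
  filter_upwards [ae_restrict_mem hs] with x hx
  exact abs_le_max_abs_abs (hbnd x hx).1 (hbnd x hx).2

theorem integral_sub_mul_le_integral_sub_mul {g : ℝ → ℝ} {x y : ℝ} (hx : 0 ≤ x) (hxy : x ≤ y)
    (hg : IntervalIntegrable g volume 0 y) (hg₀ : ∀ s ∈ Ico 0 y, 0 ≤ g s) :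
    ∫ s in (0:ℝ)..x, (x - s) * g s ≤ ∫ s in (0:ℝ)..y, (y - s) * g s := by
  have hy₀ : ∀ s ∈ Icc 0 y, 0 ≤ (y - s) * g s := by
    rintro s ⟨hs0, hsy⟩
    rcases hsy.lt_or_eq with hsy | rfl
    · exact mul_nonneg (sub_nonneg.2 hsy.le) (hg₀ s ⟨hs0, hsy⟩)
    · simp
  have hgx : IntervalIntegrable g volume 0 x :=
    hg.mono_set (uIcc_subset_uIcc_left (by rw [uIcc_of_le (hx.trans hxy)]; exact ⟨hx, hxy⟩))
  calc ∫ s in (0:ℝ)..x, (x - s) * g s ≤ ∫ s in (0:ℝ)..x, (y - s) * g s := by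
        refine integral_mono_on hx (hgx.continuousOn_mul (by fun_prop))
          (hgx.continuousOn_mul (by fun_prop)) ?_
        rintro s ⟨hs0, hsx⟩
        rcases hxy.lt_or_eq with hxy | rfl
        · nlinarith [hg₀ s ⟨hs0, hsx.trans_lt hxy⟩]
        · rfl
    _ ≤ ∫ s in (0:ℝ)..y, (y - s) * g s :=
        integral_mono_interval le_rfl hx hxy
          ((ae_restrict_iff' measurableSet_Ioc).2 <|
            ae_of_all _ fun s hs => hy₀ s (Ioc_subset_Icc_self hs))
          (hg.continuousOn_mul (by fun_prop))

namespace Volterra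

variable {q u : ℝ → ℝ} {k : ℝ}

theorem apply_zero
    (hu : ∀ x ∈ Icc (0:ℝ) 1, u x = 1 + k ^ 2 * ∫ s in (0:ℝ)..x, (x - s) * q s * u s) :
    u 0 = 1 := by
  simpa using hu 0 ⟨le_rfl, zero_le_one⟩

theorem le_of_forall_mem_Ico_mul_nonneg (hq : IntegrableOn q (Icc 0 1))
    (hu_cont : ContinuousOn u (Icc 0 1))
    (hu : ∀ x ∈ Icc (0:ℝ) 1, u x = 1 + k ^ 2 * ∫ s in (0:ℝ)..x, (x - s) * q s * u s)
    {x y : ℝ} (hx : 0 ≤ x) (hxy : x ≤ y) (hy : y ≤ 1) (hqu : ∀ s ∈ Ico 0 y, 0 ≤ q s * u s) :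
    u x ≤ u y := by
  have hsub : uIcc 0 y ⊆ Icc (0:ℝ) 1 := by
    rw [uIcc_of_le (hx.trans hxy)]
    exact Icc_subset_Icc_right hy
  have hqu_int : IntervalIntegrable (fun s => q s * u s) volume 0 y :=
    ((hq.mono_set hsub).intervalIntegrable).mul_continuousOn (hu_cont.mono hsub)
  rw [hu x ⟨hx, hxy.trans hy⟩, hu y ⟨hx.trans hxy, hy⟩]
  simp_rw [mul_assoc]
  gcongr
  exact integral_sub_mul_le_integral_sub_mul hx hxy hqu_int hqu

theorem pos (hq : IntegrableOn q (Icc 0 1)) (hq₀ : ∀ x ∈ Icc (0:ℝ) 1, 0 ≤ q x)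
    (hu_cont : ContinuousOn u (Icc 0 1))
    (hu : ∀ x ∈ Icc (0:ℝ) 1, u x = 1 + k ^ 2 * ∫ s in (0:ℝ)..x, (x - s) * q s * u s) :
    ∀ x ∈ Icc (0:ℝ) 1, 0 < u x := by
  by_contra! hneg
  -- At the first point `x₁` where `u ≤ 0`, the integrand is still nonnegative, so `u x₁ ≥ u 0 = 1`.
  have hcompact : IsCompact (Icc 0 1 ∩ u ⁻¹' Iic 0) :=
    isCompact_Icc.of_isClosed_subset
      (hu_cont.preimage_isClosed_of_isClosed isClosed_Icc isClosed_Iic) inter_subset_left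
  obtain ⟨x₁, ⟨hx₁, hux₁⟩, hleast⟩ := hcompact.exists_isLeast hneg
  have hqu : ∀ s ∈ Ico 0 x₁, 0 ≤ q s * u s := by
    rintro s ⟨hs0, hsx⟩
    have hs : s ∈ Icc (0:ℝ) 1 := ⟨hs0, hsx.le.trans hx₁.2⟩
    have hus : 0 < u s := lt_of_not_ge fun hus => hsx.not_ge (hleast ⟨hs, hus⟩)
    exact mul_nonneg (hq₀ s hs) hus.le
  have h1 := le_of_forall_mem_Ico_mul_nonneg hq hu_cont hu le_rfl hx₁.1 hx₁.2 hqu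
  rw [apply_zero hu] at h1
  exact (hux₁.trans_lt (zero_lt_one.trans_le h1)).false

theorem monotoneOn (hq : IntegrableOn q (Icc 0 1)) (hq₀ : ∀ x ∈ Icc (0:ℝ) 1, 0 ≤ q x)
    (hu_cont : ContinuousOn u (Icc 0 1))
    (hu : ∀ x ∈ Icc (0:ℝ) 1, u x = 1 + k ^ 2 * ∫ s in (0:ℝ)..x, (x - s) * q s * u s) :
    MonotoneOn u (Icc 0 1) := fun _ hx _ hy hxy =>
  le_of_forall_mem_Ico_mul_nonneg hq hu_cont hu hx.1 hxy hy.2 fun s hs =>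
    have hs' : s ∈ Icc (0:ℝ) 1 := ⟨hs.1, hs.2.le.trans hy.2⟩
    mul_nonneg (hq₀ s hs') (pos hq hq₀ hu_cont hu s hs').le

end Volterra

theorem mul_integral_tail_le_of_integral_mul_eq_zero {h w : ℝ → ℝ} {y z : ℝ}
    (hh : IntegrableOn h (Icc 0 1)) (hw_cont : ContinuousOn w (Icc 0 1))
    (hw_mono : MonotoneOn w (Icc 0 1)) (hw₀ : ∀ x ∈ Icc (0:ℝ) 1, 0 ≤ w x)
    (hz : 0 ≤ z) (hzy : z ≤ y) (hy : y ≤ 1) (hh₀ : ∀ᵐ x, x ∈ Icc z 1 → 0 ≤ h x)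
    (horth : ∫ x in (0:ℝ)..1, h x * w x = 0) :
    w y * ∫ x in y..1, h x ≤ w z * ∫ x in (0:ℝ)..z, |h x| := by
  have hmem : ∀ {a}, 0 ≤ a → a ≤ 1 → a ∈ uIcc (0:ℝ) 1 := fun ha ha' => by
    rw [uIcc_of_le zero_le_one]; exact ⟨ha, ha'⟩
  have hh_ii : IntervalIntegrable h volume 0 1 :=
    (intervalIntegrable_iff_integrableOn_Icc_of_le zero_le_one).2 hh
  have hhw_ii : IntervalIntegrable (fun x => h x * w x) volume 0 1 :=
    hh_ii.mul_continuousOn (by rwa [uIcc_of_le zero_le_one])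
  have hii : ∀ {f : ℝ → ℝ} {a b}, IntervalIntegrable f volume 0 1 → 0 ≤ a → a ≤ b → b ≤ 1 →
      IntervalIntegrable f volume a b := fun hf ha hab hb =>
    hf.mono_set (uIcc_subset_uIcc (hmem ha (hab.trans hb)) (hmem (ha.trans hab) hb))
  have head : -(w z * ∫ x in (0:ℝ)..z, |h x|) ≤ ∫ x in (0:ℝ)..z, h x * w x := by
    rw [← intervalIntegral.integral_const_mul, ← intervalIntegral.integral_neg]
    refine integral_mono_on hz ((hii hh_ii le_rfl hz (hzy.trans hy)).abs.const_mul _).neg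
      (hii hhw_ii le_rfl hz (hzy.trans hy)) fun x hx => ?_
    have hx' : x ∈ Icc (0:ℝ) 1 := ⟨hx.1, hx.2.trans (hzy.trans hy)⟩
    have hwx : |w x| ≤ w z := by
      rw [abs_of_nonneg (hw₀ x hx')]
      exact hw_mono hx' ⟨hz, hzy.trans hy⟩ hx.2
    calc -(w z * |h x|) ≤ -|h x * w x| := by
          rw [abs_mul, mul_comm]; exact neg_le_neg (mul_le_mul_of_nonneg_left hwx (abs_nonneg _))
      _ ≤ h x * w x := neg_abs_le _
  have middle : 0 ≤ ∫ x in z..y, h x * w x := by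
    refine integral_nonneg_of_ae_restrict hzy ?_
    filter_upwards [ae_restrict_mem measurableSet_Icc, ae_restrict_of_ae hh₀] with x hx hhx
    exact mul_nonneg (hhx ⟨hx.1, hx.2.trans hy⟩) (hw₀ x ⟨hz.trans hx.1, hx.2.trans hy⟩)
  have tail : w y * ∫ x in y..1, h x ≤ ∫ x in y..1, h x * w x := by
    rw [← intervalIntegral.integral_const_mul]
    refine integral_mono_ae_restrict hy ((hii hh_ii (hz.trans hzy) hy le_rfl).const_mul _)
      (hii hhw_ii (hz.trans hzy) hy le_rfl) ?_
    filter_upwards [ae_restrict_mem measurableSet_Icc, ae_restrict_of_ae hh₀] with x hx hhx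
    rw [mul_comm]
    exact mul_le_mul_of_nonneg_left
      (hw_mono ⟨hz.trans hzy, hy⟩ ⟨hz.trans (hzy.trans hx.1), hx.2⟩ hx.1)
      (hhx ⟨hzy.trans hx.1, hx.2⟩)
  rw [← integral_add_adjacent_intervals (hii hhw_ii le_rfl hz (hzy.trans hy))
      (hii hhw_ii hz (hzy.trans hy) le_rfl),
    ← integral_add_adjacent_intervals (hii hhw_ii hz hzy hy)
      (hii hhw_ii (hz.trans hzy) hy le_rfl)] at horth
  linarith

theorem orthogonality_tail_estimate_general
    (c0 c1 k : ℝ) (hc0 : 0 < c0)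
    (q1 q2 : ℝ → ℝ) (hq1_meas : Measurable q1) (hq2_meas : Measurable q2)
    (hq1_bnd : ∀ x ∈ Set.Icc (0:ℝ) 1, c0 ≤ q1 x ∧ q1 x ≤ c1)
    (hq2_bnd : ∀ x ∈ Set.Icc (0:ℝ) 1, c0 ≤ q2 x ∧ q2 x ≤ c1)
    (u1 u2 : ℝ → ℝ)
    (hu1_cont : ContinuousOn u1 (Set.Icc (0:ℝ) 1))
    (hu2_cont : ContinuousOn u2 (Set.Icc (0:ℝ) 1))
    (hu1 : ∀ x ∈ Set.Icc (0:ℝ) 1,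
      u1 x = 1 + k ^ 2 * ∫ s in (0:ℝ)..x, (x - s) * q1 s * u1 s)
    (hu2 : ∀ x ∈ Set.Icc (0:ℝ) 1,
      u2 x = 1 + k ^ 2 * ∫ s in (0:ℝ)..x, (x - s) * q2 s * u2 s)
    (h : ℝ → ℝ) (hh_int : IntegrableOn h (Set.Icc (0:ℝ) 1))
    (z : ℝ) (hz0 : 0 ≤ z)
    (hh_nonneg : ∀ᵐ x, x ∈ Set.Icc z 1 → 0 ≤ h x)
    (horth : ∫ x in (0:ℝ)..1, h x * u1 x * u2 x = 0) :
    ∀ y ∈ Set.Ioo z 1,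
      ∫ x in y..(1:ℝ), h x ≤
        (u1 z * u2 z) / (u1 y * u2 y) * ∫ x in (0:ℝ)..z, |h x| := by
  rintro y ⟨hzy, hy1⟩
  have hq1 := integrableOn_of_measurable_of_forall_mem_bounds measurableSet_Icc
    measure_Icc_lt_top.ne hq1_meas hq1_bnd
  have hq2 := integrableOn_of_measurable_of_forall_mem_bounds measurableSet_Icc
    measure_Icc_lt_top.ne hq2_meas hq2_bnd
  have hq1₀ : ∀ x ∈ Icc (0:ℝ) 1, 0 ≤ q1 x := fun x hx => hc0.le.trans (hq1_bnd x hx).1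
  have hq2₀ : ∀ x ∈ Icc (0:ℝ) 1, 0 ≤ q2 x := fun x hx => hc0.le.trans (hq2_bnd x hx).1
  have hu1_pos := Volterra.pos hq1 hq1₀ hu1_cont hu1
  have hu2_pos := Volterra.pos hq2 hq2₀ hu2_cont hu2
  have hy : y ∈ Icc (0:ℝ) 1 := ⟨hz0.trans hzy.le, hy1.le⟩
  have key := mul_integral_tail_le_of_integral_mul_eq_zero hh_int (hu1_cont.mul hu2_cont)
    ((Volterra.monotoneOn hq1 hq1₀ hu1_cont hu1).mul (Volterra.monotoneOn hq2 hq2₀ hu2_cont hu2)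
      (fun x hx => (hu1_pos x hx).le) fun x hx => (hu2_pos x hx).le)
    (fun x hx => (mul_pos (hu1_pos x hx) (hu2_pos x hx)).le) hz0 hzy.le hy1.le hh_nonneg
    (by simpa only [Pi.mul_apply, mul_assoc] using horth)
  rw [div_mul_eq_mul_div, le_div_iff₀ (mul_pos (hu1_pos y hy) (hu2_pos y hy)), mul_comm]
  exact key

/-- If `h` is integrable on `[0,1]`, nonnegative a.e. on `[z,1]`, and
`∫₀¹ h u₁ u₂ = 0`, then for every `y ∈ (z,1)`,
`∫_y¹ h ≤ (u₁(z)u₂(z))/(u₁(y)u₂(y)) ∫₀ᶻ |h|`. -/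
theorem orthogonality_tail_estimate
    (c0 c1 k : ℝ) (hc0 : 0 < c0) (hc1 : 0 < c1) (hk : 0 < k)
    (q1 q2 : ℝ → ℝ) (hq1_meas : Measurable q1) (hq2_meas : Measurable q2)
    (hq1_bnd : ∀ x ∈ Set.Icc (0:ℝ) 1, c0 ≤ q1 x ∧ q1 x ≤ c1)
    (hq2_bnd : ∀ x ∈ Set.Icc (0:ℝ) 1, c0 ≤ q2 x ∧ q2 x ≤ c1)
    (u1 u2 : ℝ → ℝ)
    (hu1_cont : ContinuousOn u1 (Set.Icc (0:ℝ) 1))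
    (hu2_cont : ContinuousOn u2 (Set.Icc (0:ℝ) 1))
    (hu1 : ∀ x ∈ Set.Icc (0:ℝ) 1,
      u1 x = 1 + k ^ 2 * ∫ s in (0:ℝ)..x, (x - s) * q1 s * u1 s)
    (hu2 : ∀ x ∈ Set.Icc (0:ℝ) 1,
      u2 x = 1 + k ^ 2 * ∫ s in (0:ℝ)..x, (x - s) * q2 s * u2 s)
    (h : ℝ → ℝ) (hh_int : IntegrableOn h (Set.Icc (0:ℝ) 1))
    (z : ℝ) (hz0 : 0 ≤ z) (hz1 : z < 1)
    (hh_nonneg : ∀ᵐ x, x ∈ Set.Icc z 1 → 0 ≤ h x)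
    (horth : ∫ x in (0:ℝ)..1, h x * u1 x * u2 x = 0) :
    ∀ y ∈ Set.Ioo z 1,
      ∫ x in y..(1:ℝ), h x ≤
        (u1 z * u2 z) / (u1 y * u2 y) * ∫ x in (0:ℝ)..z, |h x| :=
  orthogonality_tail_estimate_general c0 c1 k hc0 q1 q2 hq1_meas hq2_meas hq1_bnd hq2_bnd u1 u2
    hu1_cont hu2_cont hu1 hu2 h hh_int z hz0 hh_nonneg horth
end

section
/- Let $c_0, c_1 > 0$, $k > 0$, and let $q_1, q_2 : [0,1] \to \mathbb{R}$ be measurable with $c_0 \le q_j(x) \le c_1$ on $[0,1]$, $j=1,2$; set $p := q_2 - q_1$. Let $u_1$ be the continuous solution of $u_1(x) = 1 + k^2 \int_0^x (x-s) q_1(s) u_1(s)\,ds$, and for $j = 1,2$ let $\psi_j : [0,1] \to \mathbb{R}$ be continuous functions satisfying $\psi_j(x) = \psi_j(0) + k^2 \int_0^x (x-s) q_j(s) \psi_j(s)\,ds$ (so $\psi_j'(0) = 0$). If $\psi_1(1) = \psi_2(1)$ and $\psi_1'(1) = \psi_2'(1)$, then $\int_0^1 p(x)\, u_1(x)\, \psi_2(x)\,dx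 = 0$. -/
/-!
Write `f = k² q₁ u₁` and `gⱼ = k² qⱼ ψⱼ`, so that `u₁'' = f`, `ψⱼ'' = gⱼ` and `u₁'(0) = ψⱼ'(0) = 0`.
Green's formula for `d²/dx²`, valid for these absolutely continuous derivatives, gives
`∫₀¹ (f ψⱼ - gⱼ u₁) = u₁'(1) ψⱼ(1) - ψⱼ'(1) u₁(1)`. The right-hand side is the same for `j = 1, 2`
because `ψ₁, ψ₂` share their Cauchy data at `1`, and for `j = 1` the left-hand side vanishes
identically. Subtracting the two formulas leaves `k² ∫₀¹ (q₂ - q₁) u₁ ψ₂ = 0`.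
-/

open MeasureTheory intervalIntegral Set

section

variable {f g : ℝ → ℝ} {a b : ℝ}

theorem Measurable.intervalIntegrable_of_bounds {c₀ c₁ : ℝ} (hf : Measurable f)
    (hbnd : ∀ x ∈ uIcc a b, c₀ ≤ f x ∧ f x ≤ c₁) : IntervalIntegrable f volume a b := by
  refine (intervalIntegrable_const (c := |c₀| ⊔ |c₁|)).mono_fun' hf.aestronglyMeasurable ?_
  filter_upwards [ae_restrict_mem measurableSet_uIoc] with x hx
  exact abs_le_max_abs_abs (hbnd x (uIoc_subset_uIcc hx)).1 (hbnd x (uIoc_subset_uIcc hx)).2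

theorem IntervalIntegrable.ae_deriv_integral (hf : IntervalIntegrable f volume a b) :
    ∀ᵐ x, x ∈ uIcc a b → deriv (fun x => ∫ t in a..x, f t) x = f x := by
  filter_upwards [hf.ae_hasDerivAt_integral] with x hx hxab
  exact (hx hxab a left_mem_uIcc).deriv

theorem IntervalIntegrable.absolutelyContinuousOnInterval_const_add_integral
    (hf : IntervalIntegrable f volume a b) (c : ℝ) :
    AbsolutelyContinuousOnInterval (fun x => c + ∫ t in a..x, f t) a b :=
  (LipschitzWith.const c).lipschitzOnWith.absolutelyContinuousOnInterval.add
    (hf.absolutelyContinuousOnInterval_intervalIntegral left_mem_uIcc)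

theorem integral_integral_eq_integral_sub_mul (hf : IntervalIntegrable f volume a b) :
    ∫ t in a..b, ∫ s in a..t, f s = ∫ s in a..b, (b - s) * f s := by
  have hlin : AbsolutelyContinuousOnInterval (fun t => t - b) a b :=
    ContDiffOn.absolutelyContinuousOnInterval (by fun_prop)
  have hparts := (hf.absolutelyContinuousOnInterval_intervalIntegral left_mem_uIcc)
    |>.integral_mul_deriv_eq_deriv_mul hlin
  have hderiv : ∫ x in a..b, deriv (fun x => ∫ t in a..x, f t) x * (x - b)
      = ∫ x in a..b, f x * (x - b) := by
    refine integral_congr_ae ?_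
    filter_upwards [hf.ae_deriv_integral] with x hx hxab
    rw [hx (uIoc_subset_uIcc hxab)]
  simp only [deriv_sub_const, deriv_id'', mul_one, sub_self, mul_zero, integral_same, zero_mul,
    hderiv, zero_sub] at hparts
  rw [hparts, ← intervalIntegral.integral_neg]
  congr 1 with x
  ring

theorem AbsolutelyContinuousOnInterval.integral_deriv_mul_sub_integral_deriv_mul
    {u v F G : ℝ → ℝ} (hu : AbsolutelyContinuousOnInterval u a b)
    (hv : AbsolutelyContinuousOnInterval v a b) (hF : AbsolutelyContinuousOnInterval F a b)
    (hG : AbsolutelyContinuousOnInterval G a b)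
    (hu' : ∀ᵐ x, x ∈ uIcc a b → deriv u x = F x) (hv' : ∀ᵐ x, x ∈ uIcc a b → deriv v x = G x) :
    (∫ x in a..b, deriv F x * v x) - ∫ x in a..b, deriv G x * u x
      = (F b * v b - G b * u b) - (F a * v a - G a * u a) := by
  have hFv := hv.integral_mul_deriv_eq_deriv_mul hF
  have hGu := hu.integral_mul_deriv_eq_deriv_mul hG
  have hGF : ∫ x in a..b, deriv v x * F x = ∫ x in a..b, deriv u x * G x := by
    refine integral_congr_ae ?_
    filter_upwards [hu', hv'] with x hxu hxv hx
    rw [hxu (uIoc_subset_uIcc hx), hxv (uIoc_subset_uIcc hx), mul_comm]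
  simp only [mul_comm (deriv F _), mul_comm (deriv G _)]
  rw [hFv, hGu, hGF]
  ring

theorem eqOn_const_add_integral_integral {u : ℝ → ℝ} (hf : IntervalIntegrable f volume a b)
    (hu : ∀ x ∈ uIcc a b, u x = u a + ∫ s in a..x, (x - s) * f s) :
    EqOn u (fun x => u a + ∫ t in a..x, ∫ s in a..t, f s) (uIcc a b) := fun x hx => by
  simp only [hu x hx,
    integral_integral_eq_integral_sub_mul (hf.mono_set (uIcc_subset_uIcc_left hx))]

/-- The hypotheses say `u'' = f`, `v'' = g` and `u'(a) = v'(a) = 0`, so the right-hand side is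
`u'(b) v(b) - v'(b) u(b)`. -/
theorem integral_mul_sub_integral_mul_of_volterra {u v : ℝ → ℝ}
    (hf : IntervalIntegrable f volume a b) (hg : IntervalIntegrable g volume a b)
    (hu : ∀ x ∈ uIcc a b, u x = u a + ∫ s in a..x, (x - s) * f s)
    (hv : ∀ x ∈ uIcc a b, v x = v a + ∫ s in a..x, (x - s) * g s) :
    (∫ x in a..b, f x * v x) - ∫ x in a..b, g x * u x
      = (∫ x in a..b, f x) * v b - (∫ x in a..b, g x) * u b := by
  set F := fun x => ∫ t in a..x, f t
  set G := fun x => ∫ t in a..x, g t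
  have hFac := hf.absolutelyContinuousOnInterval_intervalIntegral left_mem_uIcc
  have hGac := hg.absolutelyContinuousOnInterval_intervalIntegral left_mem_uIcc
  have hFi : IntervalIntegrable F volume a b := hFac.continuousOn.intervalIntegrable
  have hGi : IntervalIntegrable G volume a b := hGac.continuousOn.intervalIntegrable
  have huU := eqOn_const_add_integral_integral hf hu
  have hvV := eqOn_const_add_integral_integral hg hv
  have green := (hFi.absolutelyContinuousOnInterval_const_add_integral (u a))
    |>.integral_deriv_mul_sub_integral_deriv_mul
      (hGi.absolutelyContinuousOnInterval_const_add_integral (v a)) hFac hGac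
      (by simpa only [deriv_const_add] using hFi.ae_deriv_integral)
      (by simpa only [deriv_const_add] using hGi.ae_deriv_integral)
  have hfv : ∫ x in a..b, f x * v x = ∫ x in a..b, deriv F x * (v a + ∫ t in a..x, G t) := by
    refine integral_congr_ae ?_
    filter_upwards [hf.ae_deriv_integral] with x hx hxab
    rw [hx (uIoc_subset_uIcc hxab), hvV (uIoc_subset_uIcc hxab)]
  have hgu : ∫ x in a..b, g x * u x = ∫ x in a..b, deriv G x * (u a + ∫ t in a..x, F t) := by
    refine integral_congr_ae ?_
    filter_upwards [hg.ae_deriv_integral] with x hx hxab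
    rw [hx (uIoc_subset_uIcc hxab), huU (uIoc_subset_uIcc hxab)]
  rw [hfv, hgu, green, huU right_mem_uIcc, hvV right_mem_uIcc]
  simp [F, G]

end

theorem eq_add_integral_sub_mul_of_eq_add_mul {ψ q : ℝ → ℝ} {S : Set ℝ} {a c k : ℝ} (ha : a ∈ S)
    (h : ∀ x ∈ S, ψ x = c + k * ∫ s in a..x, (x - s) * q s * ψ s) :
    ∀ x ∈ S, ψ x = ψ a + ∫ s in a..x, (x - s) * (k * q s * ψ s) := fun x hx => by
  rw [h x hx, h a ha, integral_same, mul_zero, add_zero, ← intervalIntegral.integral_const_mul]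
  congr 2 with s
  ring

theorem orthogonality_identity_general
    (c0 c1 k : ℝ) (hk : 0 < k)
    (q1 q2 : ℝ → ℝ) (hq1_meas : Measurable q1) (hq2_meas : Measurable q2)
    (hq1_bnd : ∀ x ∈ Set.Icc (0:ℝ) 1, c0 ≤ q1 x ∧ q1 x ≤ c1)
    (hq2_bnd : ∀ x ∈ Set.Icc (0:ℝ) 1, c0 ≤ q2 x ∧ q2 x ≤ c1)
    (u1 : ℝ → ℝ) (hu1_cont : ContinuousOn u1 (Set.Icc (0:ℝ) 1))
    (hu1 : ∀ x ∈ Set.Icc (0:ℝ) 1,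
      u1 x = 1 + k ^ 2 * ∫ s in (0:ℝ)..x, (x - s) * q1 s * u1 s)
    (ψ1 ψ2 : ℝ → ℝ)
    (hψ1_cont : ContinuousOn ψ1 (Set.Icc (0:ℝ) 1))
    (hψ2_cont : ContinuousOn ψ2 (Set.Icc (0:ℝ) 1))
    (hψ1 : ∀ x ∈ Set.Icc (0:ℝ) 1,
      ψ1 x = ψ1 0 + k ^ 2 * ∫ s in (0:ℝ)..x, (x - s) * q1 s * ψ1 s)
    (hψ2 : ∀ x ∈ Set.Icc (0:ℝ) 1,
      ψ2 x = ψ2 0 + k ^ 2 * ∫ s in (0:ℝ)..x, (x - s) * q2 s * ψ2 s)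
    (hval : ψ1 1 = ψ2 1)
    (hderiv : k ^ 2 * (∫ s in (0:ℝ)..1, q1 s * ψ1 s)
            = k ^ 2 * ∫ s in (0:ℝ)..1, q2 s * ψ2 s) :
    ∫ x in (0:ℝ)..1, (q2 x - q1 x) * u1 x * ψ2 x = 0 := by
  rw [← uIcc_of_le zero_le_one] at *
  have hq1 := (hq1_meas.intervalIntegrable_of_bounds hq1_bnd).const_mul (k ^ 2)
  have hq2 := (hq2_meas.intervalIntegrable_of_bounds hq2_bnd).const_mul (k ^ 2)
  have hf := hq1.mul_continuousOn hu1_cont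
  have hu1' := eq_add_integral_sub_mul_of_eq_add_mul left_mem_uIcc hu1
  have green₁ := integral_mul_sub_integral_mul_of_volterra hf (hq1.mul_continuousOn hψ1_cont)
    hu1' (eq_add_integral_sub_mul_of_eq_add_mul left_mem_uIcc hψ1)
  have green₂ := integral_mul_sub_integral_mul_of_volterra hf (hq2.mul_continuousOn hψ2_cont)
    hu1' (eq_add_integral_sub_mul_of_eq_add_mul left_mem_uIcc hψ2)
  have hG : ∫ x in (0:ℝ)..1, k ^ 2 * q1 x * ψ1 x = ∫ x in (0:ℝ)..1, k ^ 2 * q2 x * ψ2 x := by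
    simpa only [mul_assoc, intervalIntegral.integral_const_mul] using hderiv
  have hsymm : ∫ x in (0:ℝ)..1, k ^ 2 * q1 x * u1 x * ψ1 x
      = ∫ x in (0:ℝ)..1, k ^ 2 * q1 x * ψ1 x * u1 x :=
    integral_congr fun x _ => by ring
  have horth : ∫ x in (0:ℝ)..1, (k ^ 2 * q1 x * u1 x * ψ2 x - k ^ 2 * q2 x * ψ2 x * u1 x) = 0 := by
    rw [integral_sub (hf.mul_continuousOn hψ2_cont)
      ((hq2.mul_continuousOn hψ2_cont).mul_continuousOn hu1_cont), green₂, ← hval, ← hG, ← green₁,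
      hsymm, sub_self]
  refine (mul_eq_zero.mp ?_).resolve_left (pow_ne_zero 2 hk.ne')
  calc k ^ 2 * ∫ x in (0:ℝ)..1, (q2 x - q1 x) * u1 x * ψ2 x
      = -∫ x in (0:ℝ)..1, (k ^ 2 * q1 x * u1 x * ψ2 x - k ^ 2 * q2 x * ψ2 x * u1 x) := by
        rw [← intervalIntegral.integral_const_mul, ← intervalIntegral.integral_neg]
        exact integral_congr fun x _ => by ring
    _ = 0 := by rw [horth, neg_zero]

/-- orthogonality identity (25): if `ψ₁, ψ₂` solve the Neumann
integral equations with coefficients `q₁, q₂` and share the same Cauchy data at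
`x = 1` (values and derivatives `ψⱼ'(1) = k² ∫₀¹ qⱼ ψⱼ`), then
`∫₀¹ p(x) u₁(x) ψ₂(x) dx = 0`, where `p = q₂ - q₁` and `u₁` is the Volterra
solution for `q₁`. -/
theorem orthogonality_identity
    (c0 c1 k : ℝ) (hc0 : 0 < c0) (hc1 : 0 < c1) (hk : 0 < k)
    (q1 q2 : ℝ → ℝ) (hq1_meas : Measurable q1) (hq2_meas : Measurable q2)
    (hq1_bnd : ∀ x ∈ Set.Icc (0:ℝ) 1, c0 ≤ q1 x ∧ q1 x ≤ c1)
    (hq2_bnd : ∀ x ∈ Set.Icc (0:ℝ) 1, c0 ≤ q2 x ∧ q2 x ≤ c1)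
    (u1 : ℝ → ℝ) (hu1_cont : ContinuousOn u1 (Set.Icc (0:ℝ) 1))
    (hu1 : ∀ x ∈ Set.Icc (0:ℝ) 1,
      u1 x = 1 + k ^ 2 * ∫ s in (0:ℝ)..x, (x - s) * q1 s * u1 s)
    (ψ1 ψ2 : ℝ → ℝ)
    (hψ1_cont : ContinuousOn ψ1 (Set.Icc (0:ℝ) 1))
    (hψ2_cont : ContinuousOn ψ2 (Set.Icc (0:ℝ) 1))
    (hψ1 : ∀ x ∈ Set.Icc (0:ℝ) 1,
      ψ1 x = ψ1 0 + k ^ 2 * ∫ s in (0:ℝ)..x, (x - s) * q1 s * ψ1 s)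
    (hψ2 : ∀ x ∈ Set.Icc (0:ℝ) 1,
      ψ2 x = ψ2 0 + k ^ 2 * ∫ s in (0:ℝ)..x, (x - s) * q2 s * ψ2 s)
    (hval : ψ1 1 = ψ2 1)
    (hderiv : k ^ 2 * (∫ s in (0:ℝ)..1, q1 s * ψ1 s)
            = k ^ 2 * ∫ s in (0:ℝ)..1, q2 s * ψ2 s) :
    ∫ x in (0:ℝ)..1, (q2 x - q1 x) * u1 x * ψ2 x = 0 :=
  orthogonality_identity_general c0 c1 k hk q1 q2 hq1_meas hq2_meas hq1_bnd hq2_bnd u1 hu1_cont hu1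
    ψ1 ψ2 hψ1_cont hψ2_cont hψ1 hψ2 hval hderiv
end
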